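/- Let Ω be a finite graph-domain with Ω° ≠ ∅ and let f : Ω° × [0,∞) → ℝ. Suppose ũ and û are both C¹-in-t solutions of the parabolic variational inequality ∑_{Ω°} ∂_t u·(v−u) μ ≥ ∑_{Ω°} (Δu + f)·(v−u) μ for all v in the space H of functions vanishing outside Ω°, with ũ(·,0) = û(·,0) and both vanishing outside Ω°. Then ũ = û. -/

import Mathlib

/-!
Test the inequality for `ũ` with `v = û` and the one for `û` with `v = ũ` and add: the source
terms cancel and, with `d = ũ − û`, one gets `∑ ∂ₜd · d μ ≤ ∑ Δd · d μ`. Since `d` vanishes off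
`Ω°`, summation by parts turns the right-hand side into `−½ ∑ ω (d y − d x)²`, which is
nonpositive. Hence `‖d(t)‖²` is nonincreasing; it vanishes at `t = 0`, so it vanishes for all `t`.
-/

open Finset

theorem sum_sum_mul_sub_mul_nonpos {ι : Type*} (T : Finset ι) (F : ι → ι → ℝ)
    (hF_symm : ∀ x y, F x y = F y x) (hF_nonneg : ∀ x y, 0 ≤ F x y) (d : ι → ℝ) :
    ∑ x ∈ T, ∑ y ∈ T, F x y * (d y - d x) * d x ≤ 0 := by
  have htwice : 2 * ∑ x ∈ T, ∑ y ∈ T, F x y * (d y - d x) * d x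
      = -∑ x ∈ T, ∑ y ∈ T, F x y * (d y - d x) ^ 2 := by
    rw [two_mul]
    nth_rewrite 2 [sum_comm]
    simp only [← sum_add_distrib, ← sum_neg_distrib]
    refine sum_congr rfl fun x _ => sum_congr rfl fun y _ => ?_
    rw [hF_symm y x]
    ring
  have hsq : 0 ≤ ∑ x ∈ T, ∑ y ∈ T, F x y * (d y - d x) ^ 2 :=
    sum_nonneg fun x _ => sum_nonneg fun y _ => mul_nonneg (hF_nonneg x y) (sq_nonneg _)
  linarith

section GraphLaplacian

variable {V : Type*} (N : V → Finset V) (ω : V → V → ℝ) (μ : V → ℝ)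

noncomputable def graphLaplacian (u : V → ℝ) (x : V) : ℝ :=
  (1 / μ x) * ∑ y ∈ N x, ω x y * (u y - u x)

theorem graphLaplacian_sub (u w : V → ℝ) (x : V) :
    graphLaplacian N ω μ (u - w) x = graphLaplacian N ω μ u x - graphLaplacian N ω μ w x := by
  simp only [graphLaplacian, Pi.sub_apply, ← mul_sub, ← sum_sub_distrib]
  congr 1
  exact sum_congr rfl fun y _ => by ring

variable {N ω μ}

theorem sum_graphLaplacian_mul_self_nonpos (hNsym : ∀ x y, x ∈ N y ↔ y ∈ N x)
    (hω : ∀ x, ∀ y ∈ N x, 0 ≤ ω x y) (hωsym : ∀ x y, ω x y = ω y x)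
    {s : Finset V} (hμ : ∀ x ∈ s, μ x ≠ 0) {d : V → ℝ} (hd : ∀ x ∉ s, d x = 0) :
    ∑ x ∈ s, graphLaplacian N ω μ d x * d x * μ x ≤ 0 := by
  classical
  -- As `d` vanishes off `s`, the sum may run over all pairs of `T ⊇ s ∪ N(s)`, with the weight
  -- extended by zero to non-edges; this makes it symmetric in the two variables.
  set T := s ∪ s.biUnion N
  set F : V → V → ℝ := fun x y => if y ∈ N x then ω x y else 0
  have hF_symm : ∀ x y, F x y = F y x := fun x y => by
    simp only [F, hNsym y x, hωsym x y]
  have hF_nonneg : ∀ x y, 0 ≤ F x y := fun x y => by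
    by_cases hxy : y ∈ N x <;> simp [F, hxy, hω x y]
  have hrow : ∀ x ∈ s, graphLaplacian N ω μ d x * d x * μ x
      = ∑ y ∈ T, F x y * (d y - d x) * d x := fun x hx => by
    have hNT : N x ⊆ T := subset_union_right.trans' (subset_biUnion_of_mem N hx)
    simp only [F, ite_mul, zero_mul, sum_ite_mem, inter_eq_right.2 hNT, graphLaplacian]
    field_simp [hμ x hx]
    rw [mul_sum]
    exact sum_congr rfl fun y _ => by ring
  calc ∑ x ∈ s, graphLaplacian N ω μ d x * d x * μ x
      = ∑ x ∈ T, ∑ y ∈ T, F x y * (d y - d x) * d x := by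
        rw [sum_congr rfl hrow]
        refine sum_subset subset_union_left fun x _ hx => ?_
        simp [hd x hx]
    _ ≤ 0 := sum_sum_mul_sub_mul_nonpos T F hF_symm hF_nonneg d

theorem sum_sub_mul_sub_nonpos_of_variationalIneq (hNsym : ∀ x y, x ∈ N y ↔ y ∈ N x)
    (hω : ∀ x, ∀ y ∈ N x, 0 ≤ ω x y) (hωsym : ∀ x y, ω x y = ω y x)
    {s : Finset V} (hμ : ∀ x ∈ s, μ x ≠ 0) {f u w u' w' : V → ℝ}
    (hu : ∀ x ∉ s, u x = 0) (hw : ∀ x ∉ s, w x = 0)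
    (huVI : ∀ v : V → ℝ, (∀ x ∉ s, v x = 0) →
      ∑ x ∈ s, (graphLaplacian N ω μ u x + f x) * (v x - u x) * μ x
        ≤ ∑ x ∈ s, u' x * (v x - u x) * μ x)
    (hwVI : ∀ v : V → ℝ, (∀ x ∉ s, v x = 0) →
      ∑ x ∈ s, (graphLaplacian N ω μ w x + f x) * (v x - w x) * μ x
        ≤ ∑ x ∈ s, w' x * (v x - w x) * μ x) :
    ∑ x ∈ s, (u' x - w' x) * (u x - w x) * μ x ≤ 0 := by
  have hcross := add_le_add (huVI w hw) (hwVI u hu)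
  have hΔ := sum_graphLaplacian_mul_self_nonpos hNsym hω hωsym hμ (d := u - w)
    fun x hx => by simp [hu x hx, hw x hx]
  have hsource : ∑ x ∈ s, (graphLaplacian N ω μ u x + f x) * (w x - u x) * μ x
      + ∑ x ∈ s, (graphLaplacian N ω μ w x + f x) * (u x - w x) * μ x
      = -∑ x ∈ s, graphLaplacian N ω μ (u - w) x * (u - w) x * μ x := by
    rw [← sum_add_distrib, ← sum_neg_distrib]
    refine sum_congr rfl fun x _ => ?_
    rw [graphLaplacian_sub, Pi.sub_apply]
    ring
  have hderiv : ∑ x ∈ s, u' x * (w x - u x) * μ x + ∑ x ∈ s, w' x * (u x - w x) * μ x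
      = -∑ x ∈ s, (u' x - w' x) * (u x - w x) * μ x := by
    rw [← sum_add_distrib, ← sum_neg_distrib]
    exact sum_congr rfl fun x _ => by ring
  linarith

end GraphLaplacian

theorem hasDerivAt_sum_sq_sub_mul {ι : Type*} (s : Finset ι) (μ : ι → ℝ)
    {u w : ι → ℝ → ℝ} {u' w' : ι → ℝ} {t : ℝ}
    (hu : ∀ x ∈ s, HasDerivAt (u x) (u' x) t) (hw : ∀ x ∈ s, HasDerivAt (w x) (w' x) t) :
    HasDerivAt (fun t => ∑ x ∈ s, (u x t - w x t) ^ 2 * μ x)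
      (2 * ∑ x ∈ s, (u' x - w' x) * (u x t - w x t) * μ x) t := by
  refine (HasDerivAt.fun_sum fun x hx =>
    (((hu x hx).sub (hw x hx)).fun_pow 2).mul_const (μ x)).congr_deriv ?_
  rw [mul_sum]
  exact sum_congr rfl fun x _ => by rw [Pi.sub_apply]; ring

theorem le_of_hasDerivAt_nonpos {E E' : ℝ → ℝ} {a : ℝ}
    (hE : ∀ t, a ≤ t → HasDerivAt E (E' t) t) (hE' : ∀ t, a ≤ t → E' t ≤ 0)
    {t : ℝ} (ht : a ≤ t) : E t ≤ E a := by
  refine antitoneOn_of_hasDerivWithinAt_nonpos (f' := E') (convex_Ici a)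
    (fun t ht => (hE t ht).continuousAt.continuousWithinAt) (fun t ht => ?_) (fun t ht => ?_)
    Set.self_mem_Ici ht ht
  · rw [interior_Ici] at ht
    exact (hE t ht.le).hasDerivWithinAt
  · rw [interior_Ici] at ht
    exact hE' t ht.le

theorem eq_of_sum_sq_sub_mul_nonpos {ι : Type*} {s : Finset ι} {μ a b : ι → ℝ}
    (hμ : ∀ x ∈ s, 0 < μ x) (h : ∑ x ∈ s, (a x - b x) ^ 2 * μ x ≤ 0) :
    ∀ x ∈ s, a x = b x := by
  have hnonneg : ∀ x ∈ s, 0 ≤ (a x - b x) ^ 2 * μ x :=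
    fun x hx => mul_nonneg (sq_nonneg _) (hμ x hx).le
  intro x hx
  have hterm := (sum_eq_zero_iff_of_nonneg hnonneg).1 (le_antisymm h (sum_nonneg hnonneg)) x hx
  simpa [(hμ x hx).ne', sub_eq_zero] using hterm

theorem parabolic_vi_uniqueness_general {V : Type*}
    (N : V → Finset V) (hNsym : ∀ x y, x ∈ N y ↔ y ∈ N x)
    (ω : V → V → ℝ) (hωpos : ∀ x, ∀ y ∈ N x, 0 < ω x y)
    (hωsym : ∀ x y, ω x y = ω y x)
    (μ : V → ℝ) (hμ : ∀ x, 0 < μ x)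
    (int : Finset V)
    (f : V → ℝ → ℝ)
    (u w : V → ℝ → ℝ) (u' w' : V → ℝ → ℝ)
    (hud : ∀ x t, 0 ≤ t → HasDerivAt (u x) (u' x t) t)
    (hwd : ∀ x t, 0 ≤ t → HasDerivAt (w x) (w' x t) t)
    (hu0 : ∀ x ∉ int, ∀ t, 0 ≤ t → u x t = 0)
    (hw0 : ∀ x ∉ int, ∀ t, 0 ≤ t → w x t = 0)
    (hinit : ∀ x, u x 0 = w x 0)
    (huVI : ∀ t, 0 ≤ t → ∀ v : V → ℝ, (∀ x ∉ int, v x = 0) →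
      ∑ x ∈ int, ((1 / μ x) * ∑ y ∈ N x, ω x y * (u y t - u x t) + f x t)
          * (v x - u x t) * μ x
        ≤ ∑ x ∈ int, u' x t * (v x - u x t) * μ x)
    (hwVI : ∀ t, 0 ≤ t → ∀ v : V → ℝ, (∀ x ∉ int, v x = 0) →
      ∑ x ∈ int, ((1 / μ x) * ∑ y ∈ N x, ω x y * (w y t - w x t) + f x t)
          * (v x - w x t) * μ x
        ≤ ∑ x ∈ int, w' x t * (v x - w x t) * μ x) :
    ∀ x, ∀ t, 0 ≤ t → u x t = w x t := by
  intro x t ht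
  by_cases hx : x ∈ int
  · have hE : ∀ t, 0 ≤ t → HasDerivAt (fun t => ∑ x ∈ int, (u x t - w x t) ^ 2 * μ x)
        (2 * ∑ x ∈ int, (u' x t - w' x t) * (u x t - w x t) * μ x) t :=
      fun t ht => hasDerivAt_sum_sq_sub_mul int μ (fun x _ => hud x t ht) (fun x _ => hwd x t ht)
    have hE' : ∀ t, 0 ≤ t → 2 * ∑ x ∈ int, (u' x t - w' x t) * (u x t - w x t) * μ x ≤ 0 :=
      fun t ht => mul_nonpos_of_nonneg_of_nonpos zero_le_two <|
        sum_sub_mul_sub_nonpos_of_variationalIneq hNsym (fun x y hy => (hωpos x y hy).le) hωsym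
          (fun x _ => (hμ x).ne') (hu0 · · t ht) (hw0 · · t ht) (huVI t ht) (hwVI t ht)
    have hE0 : ∑ x ∈ int, (u x 0 - w x 0) ^ 2 * μ x = 0 :=
      sum_eq_zero fun x _ => by simp [hinit x]
    exact eq_of_sum_sq_sub_mul_nonpos (fun x _ => hμ x)
      ((le_of_hasDerivAt_nonpos hE hE' ht).trans_eq hE0) x hx
  · rw [hu0 x hx t ht, hw0 x hx t ht]

/-- Uniqueness for the parabolic variational inequality on the interior `Ω°` of a finite
graph-domain `Ω`: two `C¹`-in-time solutions of
`∑_{Ω°} ∂ₜu (v − u) μ ≥ ∑_{Ω°} (Δu + f)(v − u) μ` (for all test functions `v` vanishing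
outside `Ω°`) that vanish outside `Ω°` and agree at `t = 0` coincide. -/
theorem parabolic_vi_uniqueness {V : Type*}
    (N : V → Finset V) (hNsym : ∀ x y, x ∈ N y ↔ y ∈ N x)
    (ω : V → V → ℝ) (hωpos : ∀ x, ∀ y ∈ N x, 0 < ω x y)
    (hωsym : ∀ x y, ω x y = ω y x)
    (μ : V → ℝ) (hμ : ∀ x, 0 < μ x)
    (Ω int : Finset V)
    (hint : ∀ x, x ∈ int ↔ x ∈ Ω ∧ ∀ y ∈ N x, y ∈ Ω)
    (hne : int.Nonempty)
    (f : V → ℝ → ℝ)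
    (u w : V → ℝ → ℝ) (u' w' : V → ℝ → ℝ)
    (hud : ∀ x t, 0 ≤ t → HasDerivAt (u x) (u' x t) t)
    (hwd : ∀ x t, 0 ≤ t → HasDerivAt (w x) (w' x t) t)
    (hu0 : ∀ x ∉ int, ∀ t, 0 ≤ t → u x t = 0)
    (hw0 : ∀ x ∉ int, ∀ t, 0 ≤ t → w x t = 0)
    (hinit : ∀ x, u x 0 = w x 0)
    (huVI : ∀ t, 0 ≤ t → ∀ v : V → ℝ, (∀ x ∉ int, v x = 0) →
      ∑ x ∈ int, ((1 / μ x) * ∑ y ∈ N x, ω x y * (u y t - u x t) + f x t)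
          * (v x - u x t) * μ x
        ≤ ∑ x ∈ int, u' x t * (v x - u x t) * μ x)
    (hwVI : ∀ t, 0 ≤ t → ∀ v : V → ℝ, (∀ x ∉ int, v x = 0) →
      ∑ x ∈ int, ((1 / μ x) * ∑ y ∈ N x, ω x y * (w y t - w x t) + f x t)
          * (v x - w x t) * μ x
        ≤ ∑ x ∈ int, w' x t * (v x - w x t) * μ x) :
    ∀ x, ∀ t, 0 ≤ t → u x t = w x t :=
  parabolic_vi_uniqueness_general N hNsym ω hωpos hωsym μ hμ int f u w u' w' hud hwd hu0 hw0 hinit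
    huVI hwVI
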